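/- arXiv:1303.6907 — 7 statements merged into one kernel-verified Lean document; each statement's English description precedes it below -/
import Mathlib

section
/- Let G=(V,E) be a finite simple graph with unanimity thresholds. For every seed set S ⊆ V the activation process stabilizes after a single round; more precisely, σ[S] = S ∪ { v ∈ V ∖ S : N(v) ⊆ S }, i.e., the open activated set is σ(S) = { v ∉ S : every neighbor of v lies in S }. -/
open scoped Classical

variable {V : Type*} [Fintype V]

/-- The open neighborhood of `v` as a `Finset`. -/
noncomputable def nbr (G : SimpleGraph V) (v : V) : Finset V :=
  Finset.univ.filter fun w => G.Adj v w

/-- The degree of a vertex. -/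
noncomputable def deg (G : SimpleGraph V) (v : V) : ℕ := (nbr G v).card

/-- One round of the activation process: active vertices stay active and every vertex
having at least `thr v` active neighbors becomes active. -/
noncomputable def actStep (G : SimpleGraph V) (thr : V → ℕ) (A : Finset V) : Finset V :=
  A ∪ Finset.univ.filter fun v => thr v ≤ (nbr G v ∩ A).card

/-- `sigmaCl G thr S` = σ[S], the set of vertices active at the end of the activation
process started with seed set `S` (iterating `|V|` rounds suffices to stabilize). -/
noncomputable def sigmaCl (G : SimpleGraph V) (thr : V → ℕ) (S : Finset V) : Finset V :=
  (actStep G thr)^[Fintype.card V] S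

/-- `sigmaOp G thr S` = σ(S) = σ[S] \ S, the open activated set. -/
noncomputable def sigmaOp (G : SimpleGraph V) (thr : V → ℕ) (S : Finset V) : Finset V :=
  sigmaCl G thr S \ S

lemma mem_actStep_unanimity (G : SimpleGraph V) (A : Finset V) (v : V) :
    v ∈ actStep G (deg G) A ↔ v ∈ A ∨ nbr G v ⊆ A := by
  simp only [actStep, Finset.mem_union, Finset.mem_filter, Finset.mem_univ, true_and]
  constructor
  · rintro (h | h)
    · exact Or.inl h
    · right
      have hsub : nbr G v ∩ A ⊆ nbr G v := Finset.inter_subset_left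
      have := Finset.eq_of_subset_of_card_le hsub h
      intro w hw
      have : w ∈ nbr G v ∩ A := by rw [this]; exact hw
      exact (Finset.mem_inter.mp this).2
  · rintro (h | h)
    · exact Or.inl h
    · right
      have : nbr G v ∩ A = nbr G v := Finset.inter_eq_left.mpr h
      rw [this]
      exact le_rfl

lemma actStep_idem (G : SimpleGraph V) (S : Finset V) :
    actStep G (deg G) (actStep G (deg G) S) = actStep G (deg G) S := by
  ext v
  rw [mem_actStep_unanimity]
  constructor
  · rintro (h | h)
    · exact h
    · -- nbr v ⊆ actStep S
      rw [mem_actStep_unanimity]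
      by_cases hall : nbr G v ⊆ S
      · exact Or.inr hall
      · left
        obtain ⟨w, hwv, hwS⟩ := Finset.not_subset.mp hall
        have hw := h hwv
        rw [mem_actStep_unanimity] at hw
        rcases hw with hw | hw
        · exact absurd hw hwS
        · -- nbr w ⊆ S, and v ∈ nbr w by symmetry
          apply hw
          simp only [nbr, Finset.mem_filter, Finset.mem_univ, true_and] at hwv ⊢
          exact hwv.symm
  · exact Or.inl

lemma iterate_actStep (G : SimpleGraph V) (S : Finset V) (n : ℕ) :
    (actStep G (deg G))^[n + 1] S = actStep G (deg G) S := by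
  induction n with
  | zero => rfl
  | succ k ih =>
    rw [Function.iterate_succ_apply', ih, actStep_idem]

/-- With unanimity thresholds the process stabilizes after one round:
σ[S] = S ∪ { v ∉ S : N(v) ⊆ S } and σ(S) = { v ∉ S : N(v) ⊆ S }. -/
theorem stmt0 (G : SimpleGraph V) (S : Finset V) :
    sigmaCl G (deg G) S = S ∪ (Finset.univ.filter fun v => v ∉ S ∧ nbr G v ⊆ S) ∧
    sigmaOp G (deg G) S = (Finset.univ.filter fun v => v ∉ S ∧ nbr G v ⊆ S) := by
  have hcl : sigmaCl G (deg G) S = S ∪ (Finset.univ.filter fun v => v ∉ S ∧ nbr G v ⊆ S) := by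
    have hstep : actStep G (deg G) S
        = S ∪ (Finset.univ.filter fun v => v ∉ S ∧ nbr G v ⊆ S) := by
      ext v
      rw [mem_actStep_unanimity]
      simp only [Finset.mem_union, Finset.mem_filter, Finset.mem_univ, true_and]
      by_cases hv : v ∈ S <;> tauto
    unfold sigmaCl
    rcases Nat.eq_zero_or_pos (Fintype.card V) with h0 | hpos
    · have : IsEmpty V := Fintype.card_eq_zero_iff.mp h0
      simp [h0]
    · obtain ⟨n, hn⟩ := Nat.exists_eq_add_of_lt hpos
      rw [hn, show 0 + n + 1 = n + 1 by ring, iterate_actStep, hstep]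
  refine ⟨hcl, ?_⟩
  unfold sigmaOp
  rw [hcl]
  ext v
  simp only [Finset.mem_sdiff, Finset.mem_union, Finset.mem_filter, Finset.mem_univ, true_and]
  tauto
end

section
/- Let G=(V,E) be a finite simple graph with unanimity thresholds. For every seed set S ⊆ V, the open activated set σ(S) is an independent set of G (no two vertices of σ(S) are adjacent). -/
open scoped Classical

variable {V : Type*} [Fintype V]

/-- With unanimity thresholds, the open activated set σ(S) is an independent set. -/
theorem stmt1 (G : SimpleGraph V) (S : Finset V) :
    ∀ u ∈ sigmaOp G (deg G) S, ∀ v ∈ sigmaOp G (deg G) S, ¬ G.Adj u v := by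
  classical
  -- key: a newly activated vertex (under unanimity) has all neighbors already active
  have key : ∀ (A : Finset V) (w x : V), w ∈ actStep G (deg G) A → w ∉ A →
      G.Adj w x → x ∈ A := by
    intro A w x hw hwA hadj
    rcases Finset.mem_union.1 hw with h | h
    · exact absurd h hwA
    · have hle : deg G w ≤ (nbr G w ∩ A).card := (Finset.mem_filter.1 h).2
      have hsub : nbr G w ∩ A ⊆ nbr G w := Finset.inter_subset_left
      have heq : nbr G w ∩ A = nbr G w :=
        Finset.eq_of_subset_of_card_le hsub hle
      have hx : x ∈ nbr G w := by
        simp [nbr, hadj]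
      have := heq ▸ hx
      exact (Finset.mem_inter.1 this).2
  intro u hu v hv hadj
  simp only [sigmaOp, Finset.mem_sdiff, sigmaCl] at hu hv
  obtain ⟨huCl, huS⟩ := hu
  obtain ⟨hvCl, hvS⟩ := hv
  have hexu : ∃ n, u ∈ (actStep G (deg G))^[n] S := ⟨_, huCl⟩
  have hexv : ∃ n, v ∈ (actStep G (deg G))^[n] S := ⟨_, hvCl⟩
  set nu := Nat.find hexu with hnu
  set nv := Nat.find hexv with hnv
  -- from first activation of u, v is active strictly earlier
  have step : ∀ (w x : V) (hex : ∃ n, w ∈ (actStep G (deg G))^[n] S),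
      w ∉ S → G.Adj w x → x ∈ (actStep G (deg G))^[Nat.find hex - 1] S := by
    intro w x hex hwS hadjwx
    have hpos : Nat.find hex ≠ 0 := by
      intro h0
      have := Nat.find_spec hex
      rw [h0] at this
      exact hwS this
    have hw : w ∈ (actStep G (deg G))^[Nat.find hex] S := Nat.find_spec hex
    have hiter : (actStep G (deg G))^[Nat.find hex] S
        = actStep G (deg G) ((actStep G (deg G))^[Nat.find hex - 1] S) := by
      conv_lhs => rw [← Nat.succ_pred_eq_of_pos (Nat.pos_of_ne_zero hpos)]
      rw [Function.iterate_succ_apply']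
      rfl
    have hwnot : w ∉ (actStep G (deg G))^[Nat.find hex - 1] S :=
      Nat.find_min hex (Nat.pred_lt hpos)
    exact key _ w x (hiter ▸ hw) hwnot hadjwx
  have h1 : v ∈ (actStep G (deg G))^[nu - 1] S := step u v hexu huS hadj
  have h2 : u ∈ (actStep G (deg G))^[nv - 1] S := step v u hexv hvS hadj.symm
  have hupos : nu ≠ 0 := by
    intro h0
    have := Nat.find_spec hexu
    rw [← hnu, h0] at this
    exact huS this
  have hvpos : nv ≠ 0 := by
    intro h0
    have := Nat.find_spec hexv
    rw [← hnv, h0] at this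
    exact hvS this
  have hle1 : nv ≤ nu - 1 := Nat.find_le h1
  have hle2 : nu ≤ nv - 1 := Nat.find_le h2
  omega
end

section
/- Let G=(V,E) be a finite simple graph with unanimity thresholds and let S ⊆ V. Then σ[S] = V if and only if S is a vertex cover of G. -/
open scoped Classical

variable {V : Type*} [Fintype V]

lemma actStep_mono_inv (G : SimpleGraph V) {u v : V} (huv : G.Adj u v) {A : Finset V}
    (hu : u ∉ A) (hv : v ∉ A) :
    u ∉ actStep G (deg G) A ∧ v ∉ actStep G (deg G) A := by
  have key : ∀ x y : V, G.Adj x y → x ∉ A → y ∉ A → x ∉ actStep G (deg G) A := by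
    intro x y hxy hx hy
    simp only [actStep, Finset.mem_union, Finset.mem_filter, Finset.mem_univ, true_and]
    push_neg
    refine ⟨hx, ?_⟩
    have hmem : y ∈ nbr G x := by simp [nbr, hxy]
    have hss : nbr G x ∩ A ⊂ nbr G x := by
      refine Finset.ssubset_iff_of_subset Finset.inter_subset_left |>.mpr ⟨y, hmem, ?_⟩
      simp [hy]
    exact Finset.card_lt_card hss
  exact ⟨key u v huv hu hv, key v u huv.symm hv hu⟩

lemma iterate_inv (G : SimpleGraph V) {u v : V} (huv : G.Adj u v) :
    ∀ (n : ℕ) (A : Finset V), u ∉ A → v ∉ A →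
      u ∉ (actStep G (deg G))^[n] A ∧ v ∉ (actStep G (deg G))^[n] A := by
  intro n
  induction n with
  | zero => intro A hu hv; exact ⟨hu, hv⟩
  | succ n ih =>
    intro A hu hv
    rw [Function.iterate_succ_apply]
    obtain ⟨hu', hv'⟩ := actStep_mono_inv G huv hu hv
    exact ih _ hu' hv'

/-- With unanimity thresholds, σ[S] = V if and only if S is a vertex cover of G. -/
theorem stmt3 (G : SimpleGraph V) (S : Finset V) :
    sigmaCl G (deg G) S = Finset.univ ↔ (∀ u v, G.Adj u v → u ∈ S ∨ v ∈ S) := by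
  constructor
  · intro h
    by_contra hc
    push_neg at hc
    obtain ⟨u, v, huv, hu, hv⟩ := hc
    have := (iterate_inv G huv (Fintype.card V) S hu hv).1
    rw [sigmaCl] at h
    rw [h] at this
    exact this (Finset.mem_univ u)
  · intro hS
    have h1 : actStep G (deg G) S = Finset.univ := by
      apply Finset.eq_univ_of_forall
      intro x
      simp only [actStep, Finset.mem_union, Finset.mem_filter, Finset.mem_univ, true_and]
      by_cases hx : x ∈ S
      · exact Or.inl hx
      · refine Or.inr ?_
        have hsub : nbr G x ⊆ S := by
          intro w hw
          simp only [nbr, Finset.mem_filter, Finset.mem_univ, true_and] at hw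
          rcases hS x w hw with h | h
          · exact absurd h hx
          · exact h
        rw [Finset.inter_eq_left.mpr hsub]
        exact le_refl _
    have hfix : actStep G (deg G) Finset.univ = Finset.univ := by
      simp [actStep]
    rcases Nat.eq_zero_or_pos (Fintype.card V) with h0 | hpos
    · have : IsEmpty V := Fintype.card_eq_zero_iff.mp h0
      rw [sigmaCl, h0]
      simp only [Function.iterate_zero, id_eq]
      exact Finset.eq_univ_of_forall (fun x => (this.false x).elim)
    · obtain ⟨n, hn⟩ := Nat.exists_eq_succ_of_ne_zero hpos.ne'
      rw [sigmaCl, hn, Function.iterate_succ_apply, h1, Function.iterate_fixed hfix]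
end

section
/- Let G=(V,E) be a finite simple graph with maximum degree at most Δ, where Δ ≥ 1, equipped with unanimity thresholds, and let k be a positive integer. Then there exists a seed set S ⊆ V with |S| ≤ k such that |σ(S)| ≥ min(α(G), ⌊k/Δ⌋), where α(G) is the independence number of G. -/
open scoped Classical

variable {V : Type*} [Fintype V]

/-- The independence number of `G`: the maximum cardinality of a set of pairwise
nonadjacent vertices. -/
noncomputable def alphaNum (G : SimpleGraph V) : ℕ :=
  Finset.univ.sup fun W : Finset V =>
    if ∀ u ∈ W, ∀ v ∈ W, ¬ G.Adj u v then W.card else 0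

lemma subset_iterate_actStep (G : SimpleGraph V) (thr : V → ℕ) (A : Finset V) (n : ℕ) :
    A ⊆ (actStep G thr)^[n] A := by
  induction n with
  | zero => simp
  | succ n ih =>
    rw [Function.iterate_succ_apply']
    exact ih.trans Finset.subset_union_left

/-- If the maximum degree is at most Δ ≥ 1, then (with unanimity thresholds) there is a
seed set S of size at most k with |σ(S)| ≥ min(α(G), ⌊k/Δ⌋). -/
theorem stmt5 (G : SimpleGraph V) (Δ k : ℕ) (hΔ : 1 ≤ Δ)
    (hdeg : ∀ v, deg G v ≤ Δ) (hk : 1 ≤ k) :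
    ∃ S : Finset V, S.card ≤ k ∧ min (alphaNum G) (k / Δ) ≤ (sigmaOp G (deg G) S).card := by
  set m := min (alphaNum G) (k / Δ) with hm
  rcases Nat.eq_zero_or_pos m with h0 | hpos
  · exact ⟨∅, by simp, by simp [← hm, h0]⟩
  -- get a maximum independent set
  obtain ⟨W, -, hW⟩ := Finset.exists_mem_eq_sup (Finset.univ : Finset (Finset V))
    Finset.univ_nonempty (fun W : Finset V =>
      if ∀ u ∈ W, ∀ v ∈ W, ¬ G.Adj u v then W.card else 0)
  have halpha : alphaNum G = if ∀ u ∈ W, ∀ v ∈ W, ¬ G.Adj u v then W.card else 0 := hW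
  have hma : m ≤ alphaNum G := min_le_left _ _
  have hindep : ∀ u ∈ W, ∀ v ∈ W, ¬ G.Adj u v := by
    by_contra h
    rw [if_neg h] at halpha
    omega
  rw [if_pos hindep] at halpha
  obtain ⟨W', hW'W, hW'card⟩ := Finset.exists_subset_card_eq (s := W) (n := m)
    (by omega)
  have hindep' : ∀ u ∈ W', ∀ v ∈ W', ¬ G.Adj u v := fun u hu v hv =>
    hindep u (hW'W hu) v (hW'W hv)
  set S := W'.biUnion (nbr G) with hS
  refine ⟨S, ?_, ?_⟩
  · calc S.card ≤ ∑ w ∈ W', (nbr G w).card := Finset.card_biUnion_le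
      _ ≤ ∑ _w ∈ W', Δ := Finset.sum_le_sum fun w _ => hdeg w
      _ = m * Δ := by rw [Finset.sum_const, hW'card, smul_eq_mul]
      _ ≤ (k / Δ) * Δ := Nat.mul_le_mul_right _ (min_le_right _ _)
      _ ≤ k := Nat.div_mul_le_self _ _
  · have hWS : ∀ w ∈ W', w ∉ S := by
      intro w hw hwS
      obtain ⟨u, hu, hwu⟩ := Finset.mem_biUnion.mp hwS
      have : G.Adj u w := (Finset.mem_filter.mp hwu).2
      exact hindep' u hu w hw this
    have hstep : W' ⊆ actStep G (deg G) S := by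
      intro w hw
      have hsub : nbr G w ⊆ S := fun x hx =>
        Finset.mem_biUnion.mpr ⟨w, hw, hx⟩
      have : nbr G w ∩ S = nbr G w := Finset.inter_eq_left.mpr hsub
      refine Finset.mem_union_right _ (Finset.mem_filter.mpr ⟨Finset.mem_univ _, ?_⟩)
      rw [this, deg]
    have hcardV : 1 ≤ Fintype.card V := by
      have hw : W'.Nonempty := Finset.card_pos.mp (by omega)
      exact Fintype.card_pos_iff.mpr ⟨hw.choose⟩
    have hcl : W' ⊆ sigmaCl G (deg G) S := by
      obtain ⟨n, hn⟩ : ∃ n, Fintype.card V = n + 1 := ⟨Fintype.card V - 1, by omega⟩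
      rw [sigmaCl, hn, Function.iterate_succ_apply]
      exact hstep.trans (subset_iterate_actStep G _ _ n)
    have hWop : W' ⊆ sigmaOp G (deg G) S := fun w hw =>
      Finset.mem_sdiff.mpr ⟨hcl hw, hWS w hw⟩
    calc m = W'.card := hW'card.symm
      _ ≤ _ := Finset.card_le_card hWop
end

section
/- Let G=(V,E) be a finite simple Δ-regular graph with Δ ≥ 1, equipped with unanimity thresholds. Then for every seed set S ⊆ V it holds that |σ(S)| ≤ |S|. -/
open scoped Classical

variable {V : Type*} [Fintype V]

lemma subset_actStep (G : SimpleGraph V) (thr : V → ℕ) (A : Finset V) :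
    A ⊆ actStep G thr A := Finset.subset_union_left

lemma iter_mono (G : SimpleGraph V) (thr : V → ℕ) (S : Finset V) {n m : ℕ} (h : n ≤ m) :
    (actStep G thr)^[n] S ⊆ (actStep G thr)^[m] S := by
  induction m with
  | zero => simp_all
  | succ m ih =>
    rcases Nat.lt_or_ge n (m + 1) with h' | h'
    · refine (ih (Nat.lt_succ_iff.mp h')).trans ?_
      rw [Function.iterate_succ_apply']
      exact subset_actStep ..
    · have : n = m + 1 := le_antisymm h h'
      subst this; exact subset_rfl

/-- With unanimity thresholds, a vertex newly activated at step `n+1` has all its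
neighbors active at step `n`. -/
lemma unan_step (G : SimpleGraph V) (S : Finset V) {v : V} {n : ℕ}
    (hv1 : v ∈ (actStep G (deg G))^[n + 1] S) (hv0 : v ∉ (actStep G (deg G))^[n] S) :
    nbr G v ⊆ (actStep G (deg G))^[n] S := by
  set A := (actStep G (deg G))^[n] S with hA
  rw [Function.iterate_succ_apply', ← hA, actStep, Finset.mem_union] at hv1
  rcases hv1 with h | h
  · exact absurd h hv0
  · rw [Finset.mem_filter] at h
    have hsub : nbr G v ∩ A ⊆ nbr G v := Finset.inter_subset_left
    have := Finset.eq_of_subset_of_card_le hsub (by rw [← deg]; exact h.2)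
    rw [← this]
    exact Finset.inter_subset_right

/-- Every vertex of σ(S) has all its neighbors in S. -/
lemma sigmaOp_nbr_subset (G : SimpleGraph V) (S : Finset V) {v : V}
    (hv : v ∈ sigmaOp G (deg G) S) : nbr G v ⊆ S := by
  classical
  set F := fun n => (actStep G (deg G))^[n] S with hF
  have key : ∀ w ∈ sigmaOp G (deg G) S, ∃ n, w ∉ F n ∧ w ∈ F (n + 1) ∧
      nbr G w ⊆ F n := by
    intro w hw
    rw [sigmaOp, Finset.mem_sdiff] at hw
    have hex : ∃ n, w ∈ F n := ⟨Fintype.card V, hw.1⟩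
    have hkmem : w ∈ F (Nat.find hex) := Nat.find_spec hex
    have hkpos : 0 < Nat.find hex := by
      rcases Nat.eq_zero_or_pos (Nat.find hex) with h | h
      · exfalso; rw [h] at hkmem; exact hw.2 hkmem
      · exact h
    obtain ⟨m, hm⟩ : ∃ m, Nat.find hex = m + 1 :=
      ⟨Nat.find hex - 1, (Nat.succ_pred_eq_of_pos hkpos).symm⟩
    rw [hm] at hkmem
    have hnm : w ∉ F m := Nat.find_min hex (by omega)
    exact ⟨m, hnm, hkmem, unan_step G S hkmem hnm⟩
  obtain ⟨n, hvn, hvn1, hnbr⟩ := key v hv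
  intro u hu
  -- u ∈ F n; show u ∈ S
  by_contra huS
  have huCl : u ∈ sigmaCl G (deg G) S := by
    have hvCl : v ∈ sigmaCl G (deg G) S := by
      have := hv; rw [sigmaOp, Finset.mem_sdiff] at this; exact this.1
    have hnN : n ≤ Fintype.card V := by
      by_contra h
      exact hvn (iter_mono G (deg G) S (le_of_not_ge h) hvCl)
    exact iter_mono G (deg G) S hnN (hnbr hu)
  have huOp : u ∈ sigmaOp G (deg G) S := by
    rw [sigmaOp, Finset.mem_sdiff]; exact ⟨huCl, huS⟩
  obtain ⟨m, hum, hum1, hunbr⟩ := key u huOp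
  -- u ∈ F n and u ∉ F m, so m < n… then v ∈ nbr u ⊆ F m ⊆ F n, contradiction
  have hvu : v ∈ nbr G u := by
    simp only [nbr, Finset.mem_filter, Finset.mem_univ, true_and] at hu ⊢
    exact hu.symm
  have hmn : m < n := by
    by_contra h
    exact hum (iter_mono G (deg G) S (le_of_not_gt h) (hnbr hu))
  exact hvn (iter_mono G (deg G) S hmn.le (hunbr hvu))

/-- In a Δ-regular graph (Δ ≥ 1) with unanimity thresholds, |σ(S)| ≤ |S| for every
seed set S. -/
theorem stmt6 (G : SimpleGraph V) (Δ : ℕ) (hΔ : 1 ≤ Δ) (hreg : ∀ v, deg G v = Δ)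
    (S : Finset V) :
    (sigmaOp G (deg G) S).card ≤ S.card := by
  classical
  set T := sigmaOp G (deg G) S with hT
  have hnbr : ∀ v ∈ T, nbr G v ⊆ S := fun v hv => sigmaOp_nbr_subset G S hv
  have hfilter : ∀ (v : V) (B : Finset V), nbr G v ∩ B = B.filter (fun u => G.Adj v u) := by
    intro v B
    ext u
    simp [nbr, Finset.mem_inter, Finset.mem_filter, and_comm]
  have h1 : ∑ v ∈ T, (nbr G v ∩ S).card = Δ * T.card := by
    rw [Finset.sum_congr rfl (fun v hv => ?_), Finset.sum_const, smul_eq_mul, mul_comm]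
    rw [Finset.inter_eq_left.mpr (hnbr v hv), ← deg, hreg v]
  have h2 : ∑ v ∈ T, (nbr G v ∩ S).card = ∑ u ∈ S, (nbr G u ∩ T).card := by
    simp only [hfilter, Finset.card_filter]
    rw [Finset.sum_comm]
    refine Finset.sum_congr rfl fun u _ => Finset.sum_congr rfl fun v _ => ?_
    simp [SimpleGraph.adj_comm]
  have h3 : ∑ u ∈ S, (nbr G u ∩ T).card ≤ Δ * S.card := by
    calc ∑ u ∈ S, (nbr G u ∩ T).card ≤ ∑ u ∈ S, Δ := by
          refine Finset.sum_le_sum fun u _ => ?_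
          rw [← hreg u, deg]
          exact Finset.card_le_card Finset.inter_subset_left
      _ = Δ * S.card := by rw [Finset.sum_const, smul_eq_mul, mul_comm]
  have : Δ * T.card ≤ Δ * S.card := by rw [← h1]; exact h2 ▸ h3
  exact Nat.le_of_mul_le_mul_left this hΔ
end

section
/- Let G=(V,E) be a finite simple graph with unanimity thresholds and let k be a positive integer. Let F_k denote the maximum cardinality of a set of false twins of G in which every vertex has degree at most k. Then for every seed set S ⊆ V with |S| ≤ k it holds that |σ(S)| ≤ 2^k · F_k. -/
open scoped Classical

variable {V : Type*} [Fintype V]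

/-- `falseTwinMax G k` = the maximum cardinality of a set of false twins of `G`
(pairwise nonadjacent vertices sharing the same open neighborhood) in which every
vertex has degree at most `k`. -/
noncomputable def falseTwinMax (G : SimpleGraph V) (k : ℕ) : ℕ :=
  Finset.univ.sup fun F : Finset V =>
    if (∀ u ∈ F, ∀ v ∈ F, ¬ G.Adj u v) ∧ (∀ u ∈ F, ∀ v ∈ F, nbr G u = nbr G v) ∧
        (∀ v ∈ F, deg G v ≤ k)
    then F.card else 0

lemma mem_nbr (G : SimpleGraph V) {u v : V} : u ∈ nbr G v ↔ G.Adj v u := by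
  simp [nbr]

/-- Key lemma: with unanimity thresholds, every vertex active after `n` rounds that is
not in the seed set has all its neighbors in the seed set. -/
lemma key (G : SimpleGraph V) (S : Finset V) :
    ∀ n, ∀ v ∈ (actStep G (deg G))^[n] S, v ∉ S → nbr G v ⊆ S := by
  intro n
  induction n with
  | zero => intro v hv hvS; simp only [Function.iterate_zero, id_eq] at hv; exact absurd hv hvS
  | succ n ih =>
    intro v hv hvS
    rw [Function.iterate_succ_apply'] at hv
    rcases Finset.mem_union.mp hv with h | h
    · exact ih v h hvS
    · have h2 : deg G v ≤ (nbr G v ∩ (actStep G (deg G))^[n] S).card :=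
        (Finset.mem_filter.mp h).2
      have heq : nbr G v ∩ (actStep G (deg G))^[n] S = nbr G v :=
        Finset.eq_of_subset_of_card_le Finset.inter_subset_left (by exact h2)
      have hsub : nbr G v ⊆ (actStep G (deg G))^[n] S := Finset.inter_eq_left.mp heq
      intro u hu
      by_contra huS
      have hnu : nbr G u ⊆ S := ih u (hsub hu) huS
      have : v ∈ nbr G u := (mem_nbr G).mpr ((mem_nbr G).mp hu).symm
      exact hvS (hnu this)

/-- With unanimity thresholds, every seed set S with |S| ≤ k satisfies
|σ(S)| ≤ 2^k · F_k. -/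
theorem stmt9 (G : SimpleGraph V) (k : ℕ) (hk : 1 ≤ k) (S : Finset V) (hS : S.card ≤ k) :
    (sigmaOp G (deg G) S).card ≤ 2 ^ k * falseTwinMax G k := by
  set A := sigmaOp G (deg G) S with hA
  have hnbr : ∀ v ∈ A, nbr G v ⊆ S := by
    intro v hv
    have hv' := Finset.mem_sdiff.mp hv
    exact key G S (Fintype.card V) v hv'.1 hv'.2
  have hvS : ∀ v ∈ A, v ∉ S := fun v hv => (Finset.mem_sdiff.mp hv).2
  -- cover A by classes indexed by subsets of S
  have hcover : A ⊆ S.powerset.biUnion fun T => A.filter fun v => nbr G v = T := by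
    intro v hv
    refine Finset.mem_biUnion.mpr ⟨nbr G v, Finset.mem_powerset.mpr (hnbr v hv), ?_⟩
    exact Finset.mem_filter.mpr ⟨hv, rfl⟩
  have hclass : ∀ T ∈ S.powerset,
      (A.filter fun v => nbr G v = T).card ≤ falseTwinMax G k := by
    intro T hT
    set F := A.filter fun v => nbr G v = T with hF
    have hTS : T ⊆ S := Finset.mem_powerset.mp hT
    have hcond : (∀ u ∈ F, ∀ v ∈ F, ¬ G.Adj u v) ∧ (∀ u ∈ F, ∀ v ∈ F, nbr G u = nbr G v) ∧
        (∀ v ∈ F, deg G v ≤ k) := by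
      refine ⟨?_, ?_, ?_⟩
      · intro u hu v hv hadj
        have hu' := Finset.mem_filter.mp hu
        have hv' := Finset.mem_filter.mp hv
        have : v ∈ nbr G u := (mem_nbr G).mpr hadj
        exact hvS v hv'.1 (hnbr u hu'.1 this)
      · intro u hu v hv
        rw [(Finset.mem_filter.mp hu).2, (Finset.mem_filter.mp hv).2]
      · intro v hv
        have hv' := Finset.mem_filter.mp hv
        calc deg G v = (nbr G v).card := rfl
          _ ≤ S.card := Finset.card_le_card (hnbr v hv'.1)
          _ ≤ k := hS
    calc F.card = if (∀ u ∈ F, ∀ v ∈ F, ¬ G.Adj u v) ∧ (∀ u ∈ F, ∀ v ∈ F, nbr G u = nbr G v) ∧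
        (∀ v ∈ F, deg G v ≤ k) then F.card else 0 := by rw [if_pos hcond]
      _ ≤ falseTwinMax G k := by
        rw [falseTwinMax]
        exact Finset.le_sup (f := fun F : Finset V =>
          if (∀ u ∈ F, ∀ v ∈ F, ¬ G.Adj u v) ∧ (∀ u ∈ F, ∀ v ∈ F, nbr G u = nbr G v) ∧
              (∀ v ∈ F, deg G v ≤ k) then F.card else 0) (Finset.mem_univ F)
  calc A.card ≤ (S.powerset.biUnion fun T => A.filter fun v => nbr G v = T).card :=
        Finset.card_le_card hcover
    _ ≤ ∑ T ∈ S.powerset, (A.filter fun v => nbr G v = T).card := Finset.card_biUnion_le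
    _ ≤ ∑ _T ∈ S.powerset, falseTwinMax G k := Finset.sum_le_sum hclass
    _ = 2 ^ S.card * falseTwinMax G k := by
        rw [Finset.sum_const, Finset.card_powerset, smul_eq_mul]
    _ ≤ 2 ^ k * falseTwinMax G k := by
        have := Nat.pow_le_pow_right (by norm_num : 1 ≤ 2) hS
        exact Nat.mul_le_mul_right _ this
end

section
/- Let G=(V,E) be a finite simple graph with unanimity thresholds and let S ⊆ V with |S| ≤ k for a positive integer k. If the subgraph of G induced by σ[S] is connected, then any two vertices of σ[S] are at distance at most 2k in the induced subgraph G[σ[S]] (so G[σ[S]] has diameter at most 2k). -/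
/-!
A vertex of `σ(S)` becomes active only after all of its neighbours are active, so of two adjacent
vertices of `σ(S)` each would have to be activated strictly before the other. Hence `σ(S)` is
independent, i.e. `S` is a vertex cover of `G[σ[S]]`. Along a path every edge has an endpoint in the
cover and every vertex lies on at most two of its edges, so a path of `G[σ[S]]` has at most `2|S|`
edges.
-/

open scoped Classical

variable {V : Type*} [Fintype V]

namespace SimpleGraph

variable {W : Type*} {H : SimpleGraph W} {T : Finset W}

theorem Walk.length_add_le_two_mul_countP (hT : H.IsVertexCover ↑T) {x y : W} (p : H.Walk x y) :
    p.length + (if x ∈ T then 1 else 0) ≤ 2 * p.support.countP (· ∈ T) := by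
  induction p with
  | nil => split_ifs <;> simp [*]
  | @cons a b _ hab q ih =>
    by_cases ha : a ∈ T
    · simp only [length_cons, support_cons, List.countP_cons, ha, if_true, decide_true]
      split_ifs at ih <;> omega
    · have hb : b ∈ T := (hT hab).resolve_left ha
      simp only [hb, if_true] at ih
      simp only [length_cons, support_cons, List.countP_cons, ha, if_false, decide_false]
      omega

theorem Walk.IsPath.length_le_two_mul_card (hT : H.IsVertexCover ↑T) {x y : W} {p : H.Walk x y}
    (hp : p.IsPath) : p.length ≤ 2 * T.card := by
  have hcount : p.support.countP (· ∈ T) ≤ T.card := by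
    rw [List.countP_eq_length_filter, ← List.toFinset_card_of_nodup (hp.support_nodup.filter _)]
    exact Finset.card_le_card fun v hv => by simp_all
  have := p.length_add_le_two_mul_countP hT
  omega

end SimpleGraph

section Unanimity

variable (G : SimpleGraph V) (S : Finset V)

theorem monotone_iterate_actStep (thr : V → ℕ) : Monotone fun n => (actStep G thr)^[n] :=
  Function.monotone_iterate_of_id_le fun _ => Finset.subset_union_left

theorem nbr_subset_of_mem_actStep_deg {A : Finset V} {u : V} (hu : u ∈ actStep G (deg G) A)
    (huA : u ∉ A) : nbr G u ⊆ A := by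
  rcases Finset.mem_union.mp hu with h | h
  · exact absurd h huA
  · exact Finset.inter_eq_left.mp <|
      Finset.eq_of_subset_of_card_le Finset.inter_subset_left (Finset.mem_filter.mp h).2

theorem exists_nbr_subset_iterate_actStep_deg {u : V} (hu : u ∈ sigmaOp G (deg G) S) :
    ∃ n, nbr G u ⊆ (actStep G (deg G))^[n] S ∧ u ∉ (actStep G (deg G))^[n] S := by
  obtain ⟨hu, huS⟩ := Finset.mem_sdiff.mp hu
  obtain ⟨n, hn, hn1⟩ := Nat.exists_not_and_succ_of_not_zero_of_exists
    (p := fun n => u ∈ (actStep G (deg G))^[n] S) huS ⟨_, hu⟩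
  rw [Function.iterate_succ_apply'] at hn1
  exact ⟨n, nbr_subset_of_mem_actStep_deg G hn1 hn, hn⟩

theorem isIndepSet_sigmaOp_deg : G.IsIndepSet ↑(sigmaOp G (deg G) S) := by
  intro u hu v hv _ huv
  obtain ⟨n, hnbr_u, hun⟩ := exists_nbr_subset_iterate_actStep_deg G S hu
  obtain ⟨m, hnbr_v, hvm⟩ := exists_nbr_subset_iterate_actStep_deg G S hv
  have hvn : v ∈ (actStep G (deg G))^[n] S := hnbr_u (by simpa [nbr] using huv)
  have hum : u ∈ (actStep G (deg G))^[m] S := hnbr_v (by simpa [nbr] using huv.symm)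
  rcases le_total n m with h | h
  · exact hvm (monotone_iterate_actStep G _ h S hvn)
  · exact hun (monotone_iterate_actStep G _ h S hum)

theorem isVertexCover_induce_sigmaCl_deg :
    (G.induce (sigmaCl G (deg G) S : Set V)).IsVertexCover
      ↑(S.subtype (· ∈ (sigmaCl G (deg G) S : Set V))) := by
  intro a b hab
  by_contra! h
  simp only [Finset.mem_coe, Finset.mem_subtype] at h
  exact isIndepSet_sigmaOp_deg G S (Finset.mem_sdiff.mpr ⟨a.2, h.1⟩)
    (Finset.mem_sdiff.mpr ⟨b.2, h.2⟩) (G.ne_of_adj hab) hab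

end Unanimity

theorem stmt16_general (G : SimpleGraph V) (k : ℕ) (S : Finset V) (hS : S.card ≤ k)
    (hconn : (G.induce (↑(sigmaCl G (deg G) S) : Set V)).Connected) :
    ∀ x y : (↑(sigmaCl G (deg G) S) : Set V),
      (G.induce (↑(sigmaCl G (deg G) S) : Set V)).edist x y ≤ ((2 * k : ℕ) : ℕ∞) := by
  intro x y
  obtain ⟨p⟩ := hconn.preconnected x y
  have hlen : p.toPath.1.length ≤ 2 * k :=
    calc p.toPath.1.length
        ≤ 2 * (S.subtype (· ∈ (sigmaCl G (deg G) S : Set V))).card :=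
          p.toPath.2.length_le_two_mul_card (isVertexCover_induce_sigmaCl_deg G S)
      _ ≤ 2 * S.card := by
          rw [Finset.card_subtype]
          exact Nat.mul_le_mul_left 2 (Finset.card_filter_le _ _)
      _ ≤ 2 * k := by omega
  exact (SimpleGraph.Walk.edist_le _).trans (by exact_mod_cast hlen)

/-- With unanimity thresholds and |S| ≤ k, if the subgraph of G induced by σ[S] is
connected, then any two of its vertices are at distance at most 2k within G[σ[S]]. -/
theorem stmt16 (G : SimpleGraph V) (k : ℕ) (hk : 1 ≤ k) (S : Finset V) (hS : S.card ≤ k)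
    (hconn : (G.induce (↑(sigmaCl G (deg G) S) : Set V)).Connected) :
    ∀ x y : (↑(sigmaCl G (deg G) S) : Set V),
      (G.induce (↑(sigmaCl G (deg G) S) : Set V)).edist x y ≤ ((2 * k : ℕ) : ℕ∞) :=
  stmt16_general G k S hS hconn
end
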